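/- Let f(u) = ln(1+exp(u)), let S = {(x_i,y_i)}_{i=1}^n ⊂ R^d × {±1} with ‖x_i‖ ≤ 1, suppose a unit vector w* satisfies y_i⟨w*,x_i⟩ ≥ γ for all i with γ ≤ 1, and let 0 ≤ α < γ. Set β' = 2α/(γ−α) + (1+α)². Let {w_t} be the α-GD iterates with w₀ = 0, η₀ = 1, and constant step size η < 2/β' for t ≥ 1. Then for every t ≥ 1: L_rob(w_{t+1}) ≤ L_rob(w_t) − η(1 − ηβ'/2)·‖∇L_rob(w_t)‖². -/

import Mathlib

open scoped RealInnerProductSpace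

noncomputable def sig (u : ℝ) : ℝ := Real.exp u / (1 + Real.exp u)

lemma one_add_exp_pos (u : ℝ) : 0 < 1 + Real.exp u := by positivity

lemma sig_nonneg (u : ℝ) : 0 ≤ sig u := by
  unfold sig; positivity

lemma sig_le_one (u : ℝ) : sig u ≤ 1 := by
  unfold sig
  rw [div_le_one (one_add_exp_pos u)]
  linarith

lemma sig_zero : sig 0 = 1/2 := by simp [sig]; norm_num

lemma hasDerivAt_logexp (u : ℝ) :
    HasDerivAt (fun u => Real.log (1 + Real.exp u)) (sig u) u := by
  have h1 : HasDerivAt (fun u : ℝ => 1 + Real.exp u) (Real.exp u) u :=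
    (Real.hasDerivAt_exp u).const_add 1
  have := h1.log (ne_of_gt (one_add_exp_pos u))
  simpa [sig, div_eq_mul_inv, mul_comm] using this

lemma deriv_logexp : deriv (fun u => Real.log (1 + Real.exp u)) = sig := by
  funext u; exact (hasDerivAt_logexp u).deriv

lemma hasDerivAt_sig (u : ℝ) :
    HasDerivAt sig (Real.exp u / (1 + Real.exp u) ^ 2) u := by
  have h1 : HasDerivAt (fun u : ℝ => 1 + Real.exp u) (Real.exp u) u :=
    (Real.hasDerivAt_exp u).const_add 1
  have := (Real.hasDerivAt_exp u).div h1 (ne_of_gt (one_add_exp_pos u))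
  have e : (Real.exp u * (1 + Real.exp u) - Real.exp u * Real.exp u) / (1 + Real.exp u) ^ 2
      = Real.exp u / (1 + Real.exp u) ^ 2 := by ring
  rw [← e]; exact this

lemma sig_lipschitz (a b : ℝ) : |sig a - sig b| ≤ |a - b| := by
  have hd : Differentiable ℝ sig := fun u => (hasDerivAt_sig u).differentiableAt
  have hL : LipschitzWith 1 sig := by
    apply lipschitzWith_of_nnnorm_deriv_le hd
    intro u
    have : deriv sig u = Real.exp u / (1 + Real.exp u) ^ 2 := (hasDerivAt_sig u).deriv
    rw [← NNReal.coe_le_coe, coe_nnnorm, this]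
    have h := Real.exp_pos u
    rw [NNReal.coe_one, Real.norm_eq_abs, abs_div, abs_of_pos h, abs_of_pos (by positivity : (0:ℝ) < (1 + Real.exp u)^2), div_le_one (by positivity)]
    nlinarith
  have := hL.dist_le_mul a b
  simpa [Real.dist_eq] using this


variable {E : Type*} [NormedAddCommGroup E] [InnerProductSpace ℝ E]

lemma norm_normalize_sub_le {u v : E} (hu : u ≠ 0) (hv : v ≠ 0) :
    ‖‖u‖⁻¹ • u - ‖v‖⁻¹ • v‖ ≤ 2 / (‖u‖ + ‖v‖) * ‖u - v‖ := by
  have ha : (0:ℝ) < ‖u‖ := norm_pos_iff.mpr hu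
  have hb : (0:ℝ) < ‖v‖ := norm_pos_iff.mpr hv
  set a := ‖u‖; set b := ‖v‖
  have hc : |⟪u, v⟫| ≤ a * b := abs_real_inner_le_norm u v
  have hL2 : ‖‖u‖⁻¹ • u - ‖v‖⁻¹ • v‖ ^ 2 = 2 - 2 * ⟪u, v⟫ / (a * b) := by
    rw [norm_sub_sq_real, norm_smul, norm_smul, real_inner_smul_left, real_inner_smul_right]
    rw [Real.norm_eq_abs, Real.norm_eq_abs, abs_of_pos (by positivity : (0:ℝ) < a⁻¹),
      abs_of_pos (by positivity : (0:ℝ) < b⁻¹)]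
    have : a⁻¹ * a = 1 := inv_mul_cancel₀ ha.ne'
    have hb' : b⁻¹ * b = 1 := inv_mul_cancel₀ hb.ne'
    field_simp
    ring
  have hR2 : (2 / (a + b) * ‖u - v‖) ^ 2 = 4 * (a^2 - 2*⟪u,v⟫ + b^2) / (a+b)^2 := by
    rw [mul_pow, norm_sub_sq_real]
    rw [div_pow]
    ring
  have key : ‖‖u‖⁻¹ • u - ‖v‖⁻¹ • v‖ ^ 2 ≤ (2 / (a + b) * ‖u - v‖) ^ 2 := by
    rw [hL2, hR2]
    set c := ⟪u, v⟫ with hcdef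
    have hLrw : 2 - 2*c/(a*b) = (2*a*b - 2*c)/(a*b) := by field_simp
    rw [hLrw, div_le_div_iff₀ (by positivity) (by positivity)]
    rw [abs_le] at hc
    obtain ⟨hc1, hc2⟩ := hc
    nlinarith [mul_nonneg (sq_nonneg (a - b)) (by linarith : (0:ℝ) ≤ a*b + c)]
  have h1 : (0:ℝ) ≤ ‖‖u‖⁻¹ • u - ‖v‖⁻¹ • v‖ := norm_nonneg _
  have h2 : (0:ℝ) ≤ 2 / (a + b) * ‖u - v‖ := by positivity
  nlinarith [key]

noncomputable def Gv {n : ℕ} (x : Fin n → E) (y : Fin n → ℝ) (α : ℝ) (w : E) : E :=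
  (n : ℝ)⁻¹ • ∑ i, sig (-(y i) * ⟪w, x i⟫ + α * ‖w‖) • (-(y i) • x i + α • (‖w‖⁻¹ • w))

noncomputable def Lv {n : ℕ} (x : Fin n → E) (y : Fin n → ℝ) (α : ℝ) (w : E) : ℝ :=
  (n : ℝ)⁻¹ * ∑ i, Real.log (1 + Real.exp (-(y i) * ⟪w, x i⟫ + α * ‖w‖))

lemma norm_normalize_le (w : E) : ‖‖w‖⁻¹ • w‖ ≤ 1 := by
  rcases eq_or_ne w 0 with h | h
  · simp [h]
  · have h0 : (0:ℝ) < ‖w‖ := norm_pos_iff.mpr h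
    rw [norm_smul, Real.norm_eq_abs, abs_of_pos (inv_pos.mpr h0), inv_mul_cancel₀ h0.ne']

lemma Gv_lip {n : ℕ} (x : Fin n → E) (y : Fin n → ℝ)
    (hx : ∀ i, ‖x i‖ ≤ 1) (hy : ∀ i, |y i| = 1)
    {γ α : ℝ} (hα0 : 0 ≤ α) (hαγ : α < γ)
    {u v : E} (hu : γ / 2 ≤ ‖u‖) (hv : γ / 2 ≤ ‖v‖) :
    ‖Gv x y α u - Gv x y α v‖ ≤ (2 * α / (γ - α) + (1 + α) ^ 2) * ‖u - v‖ := by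
  set C := 2 * α / (γ - α) + (1 + α) ^ 2 with hC
  have hγ : 0 < γ := lt_of_le_of_lt hα0 hαγ
  have hu0 : u ≠ 0 := by
    intro h; rw [h, norm_zero] at hu; linarith
  have hv0 : v ≠ 0 := by
    intro h; rw [h, norm_zero] at hv; linarith
  have key : ∀ i, ‖sig (-(y i) * ⟪u, x i⟫ + α * ‖u‖) • (-(y i) • x i + α • (‖u‖⁻¹ • u))
      - sig (-(y i) * ⟪v, x i⟫ + α * ‖v‖) • (-(y i) • x i + α • (‖v‖⁻¹ • v))‖
      ≤ C * ‖u - v‖ := by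
    intro i
    set su := -(y i) * ⟪u, x i⟫ + α * ‖u‖
    set sv := -(y i) * ⟪v, x i⟫ + α * ‖v‖
    set pu : E := -(y i) • x i + α • (‖u‖⁻¹ • u)
    set pv : E := -(y i) • x i + α • (‖v‖⁻¹ • v)
    have split : sig su • pu - sig sv • pv = (sig su - sig sv) • pu + sig sv • (pu - pv) := by
      rw [sub_smul, smul_sub]; abel
    have hpu : ‖pu‖ ≤ 1 + α := by
      calc ‖pu‖ ≤ ‖-(y i) • x i‖ + ‖α • (‖u‖⁻¹ • u)‖ := norm_add_le _ _
      _ ≤ 1 + α := by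
        rw [norm_smul, norm_smul, norm_neg]
        have h1 : ‖y i‖ * ‖x i‖ ≤ 1 := by
          rw [Real.norm_eq_abs, hy i, one_mul]; exact hx i
        have h2 : ‖α‖ * ‖‖u‖⁻¹ • u‖ ≤ α := by
          rw [Real.norm_eq_abs, abs_of_nonneg hα0]
          nlinarith [norm_normalize_le u]
        linarith
    have hsdiff : |su - sv| ≤ (1 + α) * ‖u - v‖ := by
      have e : su - sv = -(y i) * ⟪u - v, x i⟫ + α * (‖u‖ - ‖v‖) := by
        rw [inner_sub_left]; ring
      rw [e]
      calc |(-(y i)) * ⟪u - v, x i⟫ + α * (‖u‖ - ‖v‖)|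
          ≤ |(-(y i)) * ⟪u - v, x i⟫| + |α * (‖u‖ - ‖v‖)| := abs_add_le _ _
      _ ≤ 1 * ‖u - v‖ + α * ‖u - v‖ := by
          gcongr ?_ + ?_
          · rw [abs_mul, abs_neg, hy i, one_mul]
            calc |⟪u - v, x i⟫| ≤ ‖u - v‖ * ‖x i‖ := abs_real_inner_le_norm _ _
            _ ≤ ‖u - v‖ * 1 := by gcongr; exact hx i
            _ = 1 * ‖u - v‖ := by ring
          · rw [abs_mul, abs_of_nonneg hα0]
            gcongr
            exact abs_norm_sub_norm_le u v
      _ = (1 + α) * ‖u - v‖ := by ring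
    have hpdiff : ‖pu - pv‖ ≤ 2 * α / (γ - α) * ‖u - v‖ := by
      have e : pu - pv = α • (‖u‖⁻¹ • u - ‖v‖⁻¹ • v) := by
        simp only [pu, pv, smul_sub]; abel
      rw [e, norm_smul, Real.norm_eq_abs, abs_of_nonneg hα0]
      have h1 : ‖‖u‖⁻¹ • u - ‖v‖⁻¹ • v‖ ≤ 2 / (‖u‖ + ‖v‖) * ‖u - v‖ :=
        norm_normalize_sub_le hu0 hv0
      have h2 : 2 / (‖u‖ + ‖v‖) ≤ 2 / (γ - α) := by
        apply div_le_div_of_nonneg_left (by norm_num) (by linarith) (by linarith)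
      calc α * ‖‖u‖⁻¹ • u - ‖v‖⁻¹ • v‖ ≤ α * (2 / (‖u‖ + ‖v‖) * ‖u - v‖) := by gcongr
      _ ≤ α * (2 / (γ - α) * ‖u - v‖) := by
          have := mul_le_mul_of_nonneg_right h2 (norm_nonneg (u - v))
          nlinarith
      _ = 2 * α / (γ - α) * ‖u - v‖ := by ring
    calc ‖sig su • pu - sig sv • pv‖
        ≤ ‖(sig su - sig sv) • pu‖ + ‖sig sv • (pu - pv)‖ := by rw [split]; exact norm_add_le _ _
    _ ≤ (1 + α) * ‖u - v‖ * (1 + α) + 1 * (2 * α / (γ - α) * ‖u - v‖) := by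
        gcongr ?_ + ?_
        · rw [norm_smul, Real.norm_eq_abs]
          have := (sig_lipschitz su sv).trans hsdiff
          exact mul_le_mul this hpu (norm_nonneg _) (by positivity)
        · rw [norm_smul, Real.norm_eq_abs, abs_of_nonneg (sig_nonneg sv)]
          exact mul_le_mul (sig_le_one sv) hpdiff (norm_nonneg _) one_pos.le
    _ = C * ‖u - v‖ := by rw [hC]; ring
  have hsum : ‖(∑ i, sig (-(y i) * ⟪u, x i⟫ + α * ‖u‖) • (-(y i) • x i + α • (‖u‖⁻¹ • u)))
      - ∑ i, sig (-(y i) * ⟪v, x i⟫ + α * ‖v‖) • (-(y i) • x i + α • (‖v‖⁻¹ • v))‖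
      ≤ (n : ℝ) * (C * ‖u - v‖) := by
    rw [← Finset.sum_sub_distrib]
    calc ‖∑ i, (sig (-(y i) * ⟪u, x i⟫ + α * ‖u‖) • (-(y i) • x i + α • (‖u‖⁻¹ • u))
        - sig (-(y i) * ⟪v, x i⟫ + α * ‖v‖) • (-(y i) • x i + α • (‖v‖⁻¹ • v)))‖
        ≤ ∑ _i : Fin n, C * ‖u - v‖ := norm_sum_le_of_le _ (fun i _ => key i)
    _ = (n : ℝ) * (C * ‖u - v‖) := by
        rw [Finset.sum_const, Finset.card_univ, Fintype.card_fin, nsmul_eq_mul]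
  unfold Gv
  rw [← smul_sub, norm_smul, Real.norm_eq_abs, abs_of_nonneg (by positivity : (0:ℝ) ≤ (n:ℝ)⁻¹)]
  calc (n:ℝ)⁻¹ * ‖_ - _‖ ≤ (n:ℝ)⁻¹ * ((n:ℝ) * (C * ‖u - v‖)) := by gcongr
  _ ≤ C * ‖u - v‖ := by
      rcases Nat.eq_zero_or_pos n with h | h
      · have hC0 : (0:ℝ) ≤ C := by
          rw [hC]
          have h1 : (0:ℝ) ≤ 2*α/(γ-α) := div_nonneg (by linarith) (by linarith)
          nlinarith [sq_nonneg (1+α)]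
        simp [h]
        exact mul_nonneg hC0 (norm_nonneg _)
      · rw [← mul_assoc, inv_mul_cancel₀ (by exact_mod_cast h.ne' : ((n:ℝ) ≠ 0)), one_mul]

lemma Gv_inner_wstar_nonpos {n : ℕ} (x : Fin n → E) (y : Fin n → ℝ)
    (wstar : E) (hwstar : ‖wstar‖ = 1) {γ α : ℝ}
    (hmargin : ∀ i, γ ≤ y i * ⟪wstar, x i⟫) (hα0 : 0 ≤ α) (hαγ : α ≤ γ) (w : E) :
    ⟪wstar, Gv x y α w⟫ ≤ 0 := by
  unfold Gv
  rw [real_inner_smul_right, inner_sum]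
  apply mul_nonpos_of_nonneg_of_nonpos (by positivity)
  apply Finset.sum_nonpos
  intro i _
  rw [real_inner_smul_right]
  apply mul_nonpos_of_nonneg_of_nonpos (sig_nonneg _)
  rw [inner_add_right, real_inner_smul_right, real_inner_smul_right]
  have h1 : ⟪wstar, x i⟫ * -(y i) ≤ -γ := by
    have := hmargin i
    nlinarith
  have h2 : ⟪wstar, ‖w‖⁻¹ • w⟫ ≤ 1 := by
    calc ⟪wstar, ‖w‖⁻¹ • w⟫ ≤ ‖wstar‖ * ‖‖w‖⁻¹ • w‖ := real_inner_le_norm _ _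
    _ ≤ 1 := by rw [hwstar, one_mul]; exact norm_normalize_le w
  have e : (⟪wstar, -(y i) • x i⟫ : ℝ) = ⟪wstar, x i⟫ * -(y i) := by
    rw [real_inner_smul_right]; ring
  have : α * ⟪wstar, ‖w‖⁻¹ • w⟫ ≤ α := by nlinarith
  rw [real_inner_smul_right] at *
  nlinarith [hmargin i]

lemma Gv_inner_wstar_zero {n : ℕ} (hn : 0 < n) (x : Fin n → E) (y : Fin n → ℝ)
    (wstar : E) {γ α : ℝ}
    (hmargin : ∀ i, γ ≤ y i * ⟪wstar, x i⟫) :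
    ⟪wstar, Gv x y α (0 : E)⟫ ≤ -(γ/2) := by
  unfold Gv
  rw [real_inner_smul_right, inner_sum]
  have e : ∀ i : Fin n, (⟪wstar, sig (-(y i) * ⟪(0:E), x i⟫ + α * ‖(0:E)‖) •
      (-(y i) • x i + α • (‖(0:E)‖⁻¹ • (0:E)))⟫ : ℝ) = -(1/2 * (y i * ⟪wstar, x i⟫)) := by
    intro i
    rw [norm_zero, inner_zero_left, smul_zero, smul_zero, add_zero]
    rw [real_inner_smul_right, real_inner_smul_right]
    simp only [mul_zero, neg_zero, zero_mul, zero_add, mul_zero, add_zero]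
    rw [sig_zero]
    ring
  rw [Finset.sum_congr rfl (fun i _ => e i)]
  have hsum : (∑ i : Fin n, -(1/2 * (y i * ⟪wstar, x i⟫))) ≤ (n : ℝ) * (-(γ/2)) := by
    calc (∑ i : Fin n, -(1/2 * (y i * ⟪wstar, x i⟫))) ≤ ∑ _i : Fin n, -(γ/2) := by
          apply Finset.sum_le_sum
          intro i _
          have := hmargin i
          linarith
    _ = (n : ℝ) * (-(γ/2)) := by
        rw [Finset.sum_const, Finset.card_univ, Fintype.card_fin, nsmul_eq_mul]
  have hn' : (0:ℝ) < (n:ℝ) := by exact_mod_cast hn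
  calc (n:ℝ)⁻¹ * (∑ i : Fin n, -(1/2 * (y i * ⟪wstar, x i⟫)))
      ≤ (n:ℝ)⁻¹ * ((n:ℝ) * (-(γ/2))) := by
        apply mul_le_mul_of_nonneg_left hsum (by positivity)
  _ = -(γ/2) := by field_simp

lemma descent_core {n : ℕ} (x : Fin n → E) (y : Fin n → ℝ) (α C η : ℝ)
    (hη : 0 ≤ η) (a : E)
    (hne : ∀ τ : ℝ, τ ∈ Set.Icc (0:ℝ) 1 → a - (τ * η) • Gv x y α a ≠ 0)
    (hlip : ∀ τ : ℝ, τ ∈ Set.Icc (0:ℝ) 1 →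
      ‖Gv x y α (a - (τ * η) • Gv x y α a) - Gv x y α a‖ ≤ C * (τ * η * ‖Gv x y α a‖)) :
    Lv x y α (a - η • Gv x y α a) ≤ Lv x y α a - η * (1 - η * C / 2) * ‖Gv x y α a‖ ^ 2 := by
  set g := Gv x y α a with hg
  set v : ℝ → E := fun τ => a - (τ * η) • g with hv
  have hφ : ∀ τ₀ ∈ Set.Icc (0:ℝ) 1,
      HasDerivAt (fun τ => Lv x y α (v τ)) (-η * ⟪Gv x y α (v τ₀), g⟫) τ₀ := by
    intro τ₀ hτ₀
    have hvne : v τ₀ ≠ 0 := hne τ₀ hτ₀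
    have hnv : (0:ℝ) < ‖v τ₀‖ := norm_pos_iff.mpr hvne
    have hval : (⟪a, a⟫ : ℝ) - τ₀ * (2 * η * ⟪a, g⟫) + τ₀^2 * (η^2 * ⟪g, g⟫)
        = ‖v τ₀‖ * ‖v τ₀‖ := by
      rw [← real_inner_self_eq_norm_mul_norm]
      simp only [hv, inner_sub_left, inner_sub_right, real_inner_smul_left,
        real_inner_smul_right]
      rw [real_inner_comm g a]
      ring
    have hq : HasDerivAt (fun τ => ‖v τ‖) (⟪v τ₀, g⟫ * (-η) / ‖v τ₀‖) τ₀ := by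
      have epoly : (fun τ => ‖v τ‖) = fun τ =>
          Real.sqrt ((⟪a, a⟫ : ℝ) - τ * (2 * η * ⟪a, g⟫) + τ^2 * (η^2 * ⟪g, g⟫)) := by
        funext τ
        have h1 : (⟪a, a⟫ : ℝ) - τ * (2 * η * ⟪a, g⟫) + τ^2 * (η^2 * ⟪g, g⟫)
            = ⟪v τ, v τ⟫ := by
          simp only [hv, inner_sub_left, inner_sub_right, real_inner_smul_left,
            real_inner_smul_right]
          rw [real_inner_comm g a]
          ring
        rw [h1, real_inner_self_eq_norm_mul_norm, Real.sqrt_mul_self (norm_nonneg _)]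
      have hpoly : HasDerivAt
          (fun τ : ℝ => (⟪a, a⟫ : ℝ) - τ * (2 * η * ⟪a, g⟫) + τ^2 * (η^2 * ⟪g, g⟫))
          (-(2 * η * ⟪a, g⟫) + 2 * τ₀ * (η^2 * ⟪g, g⟫)) τ₀ := by
        have h1 : HasDerivAt (fun τ : ℝ => τ * (2 * η * ⟪a, g⟫)) (2 * η * ⟪a, g⟫) τ₀ := by
          simpa using (hasDerivAt_id τ₀).mul_const (2 * η * (⟪a, g⟫ : ℝ))
        have h2 : HasDerivAt (fun τ : ℝ => τ^2 * (η^2 * ⟪g, g⟫))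
            (2 * τ₀ * (η^2 * ⟪g, g⟫)) τ₀ := by
          have := (hasDerivAt_pow 2 τ₀).mul_const (η^2 * (⟪g, g⟫ : ℝ))
          norm_num at this
          rw [real_inner_self_eq_norm_sq]
          exact this
        have h3 := (h1.const_sub (⟪a, a⟫ : ℝ)).add h2
        exact h3
      have hne0 : (⟪a, a⟫ : ℝ) - τ₀ * (2 * η * ⟪a, g⟫) + τ₀^2 * (η^2 * ⟪g, g⟫) ≠ 0 := by
        rw [hval]; positivity
      have hcomp := (Real.hasDerivAt_sqrt hne0).comp τ₀ hpoly
      rw [epoly]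
      refine hcomp.congr_deriv ?_
      symm
      have hsq : Real.sqrt ((⟪a, a⟫ : ℝ) - τ₀ * (2 * η * ⟪a, g⟫) + τ₀^2 * (η^2 * ⟪g, g⟫))
          = ‖v τ₀‖ := by
        rw [hval, Real.sqrt_mul_self (norm_nonneg _)]
      rw [hsq]
      have hvg : (⟪v τ₀, g⟫ : ℝ) = ⟪a, g⟫ - τ₀ * η * ⟪g, g⟫ := by
        simp only [hv, inner_sub_left, real_inner_smul_left]
      rw [hvg]
      field_simp
      ring
    have hinner : ∀ i, HasDerivAt (fun τ => (⟪v τ, x i⟫ : ℝ)) (-(η * ⟪g, x i⟫)) τ₀ := by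
      intro i
      have e : (fun τ => (⟪v τ, x i⟫ : ℝ)) = fun τ => (⟪a, x i⟫ : ℝ) - τ * (η * ⟪g, x i⟫) := by
        funext τ
        simp only [hv, inner_sub_left, real_inner_smul_left]
        ring
      rw [e]
      have h1 : HasDerivAt (fun τ : ℝ => τ * (η * ⟪g, x i⟫)) (η * ⟪g, x i⟫) τ₀ := by
        simpa using (hasDerivAt_id τ₀).mul_const (η * (⟪g, x i⟫ : ℝ))
      exact h1.const_sub (⟪a, x i⟫ : ℝ)
    set D : Fin n → ℝ := fun i =>
      -(y i) * -(η * ⟪g, x i⟫) + α * (⟪v τ₀, g⟫ * (-η) / ‖v τ₀‖) with hD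
    have hs : ∀ i, HasDerivAt (fun τ => -(y i) * ⟪v τ, x i⟫ + α * ‖v τ‖) (D i) τ₀ :=
      fun i => (((hinner i).const_mul (-(y i))).add (hq.const_mul α))
    have hlog : ∀ i, HasDerivAt
        (fun τ => Real.log (1 + Real.exp (-(y i) * ⟪v τ, x i⟫ + α * ‖v τ‖)))
        (sig (-(y i) * ⟪v τ₀, x i⟫ + α * ‖v τ₀‖) * D i) τ₀ :=
      fun i => (hasDerivAt_logexp _).comp τ₀ (hs i)
    have hsum : HasDerivAt
        (fun τ => (n:ℝ)⁻¹ * ∑ i, Real.log (1 + Real.exp (-(y i) * ⟪v τ, x i⟫ + α * ‖v τ‖)))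
        ((n:ℝ)⁻¹ * ∑ i, sig (-(y i) * ⟪v τ₀, x i⟫ + α * ‖v τ₀‖) * D i) τ₀ :=
      (HasDerivAt.fun_sum (fun i _ => hlog i)).const_mul (n:ℝ)⁻¹
    have hfun : (fun τ => Lv x y α (v τ)) =
        fun τ => (n:ℝ)⁻¹ * ∑ i, Real.log (1 + Real.exp (-(y i) * ⟪v τ, x i⟫ + α * ‖v τ‖)) := rfl
    rw [hfun]
    convert hsum using 1
    unfold Gv
    rw [real_inner_smul_left, sum_inner]
    rw [Finset.mul_sum, Finset.mul_sum, Finset.mul_sum]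
    refine Finset.sum_congr rfl fun i _ => ?_
    simp only [hD, inner_add_left, real_inner_smul_left, real_inner_comm (x i) g]
    ring
  -- ψ and antitonicity
  set ψ : ℝ → ℝ := fun τ => Lv x y α (v τ) + τ * (η * ‖g‖^2) - τ^2 * (C * η^2 * ‖g‖^2 / 2)
    with hψ
  have hψd : ∀ τ₀ ∈ Set.Icc (0:ℝ) 1, HasDerivAt ψ
      (-η * ⟪Gv x y α (v τ₀), g⟫ + η * ‖g‖^2 - 2 * τ₀ * (C * η^2 * ‖g‖^2 / 2)) τ₀ := by
    intro τ₀ hτ₀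
    have h1 : HasDerivAt (fun τ : ℝ => τ * (η * ‖g‖^2)) (η * ‖g‖^2) τ₀ := by
      simpa using (hasDerivAt_id τ₀).mul_const (η * ‖g‖^2)
    have h2 : HasDerivAt (fun τ : ℝ => τ^2 * (C * η^2 * ‖g‖^2 / 2))
        (2 * τ₀ * (C * η^2 * ‖g‖^2 / 2)) τ₀ := by
      have := (hasDerivAt_pow 2 τ₀).mul_const (C * η^2 * ‖g‖^2 / 2)
      norm_num at this
      convert this using 1
    exact ((hφ τ₀ hτ₀).add h1).sub h2
  have hψnonpos : ∀ τ₀ ∈ Set.Icc (0:ℝ) 1,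
      -η * ⟪Gv x y α (v τ₀), g⟫ + η * ‖g‖^2 - 2 * τ₀ * (C * η^2 * ‖g‖^2 / 2) ≤ 0 := by
    intro τ₀ hτ₀
    have h1 : (⟪g - Gv x y α (v τ₀), g⟫ : ℝ) ≤ ‖g - Gv x y α (v τ₀)‖ * ‖g‖ :=
      real_inner_le_norm _ _
    have h2 : ‖g - Gv x y α (v τ₀)‖ ≤ C * (τ₀ * η * ‖g‖) := by
      rw [norm_sub_rev]; exact hlip τ₀ hτ₀
    have h5 : (⟪g - Gv x y α (v τ₀), g⟫ : ℝ) ≤ C * (τ₀ * η * ‖g‖) * ‖g‖ :=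
      h1.trans (mul_le_mul_of_nonneg_right h2 (norm_nonneg g))
    have h3 : (⟪g - Gv x y α (v τ₀), g⟫ : ℝ) = ⟪g, g⟫ - ⟪Gv x y α (v τ₀), g⟫ :=
      inner_sub_left g (Gv x y α (v τ₀)) g
    have h4 : (⟪g, g⟫ : ℝ) = ‖g‖^2 := real_inner_self_eq_norm_sq g
    rw [h3, h4] at h5
    nlinarith [mul_le_mul_of_nonneg_left h5 hη]
  have hcont : ContinuousOn ψ (Set.Icc 0 1) :=
    fun τ hτ => ((hψd τ hτ).continuousAt).continuousWithinAt
  have hmono : AntitoneOn ψ (Set.Icc 0 1) := by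
    apply antitoneOn_of_deriv_nonpos (convex_Icc 0 1) hcont
    · intro τ hτ
      rw [interior_Icc] at hτ
      exact ((hψd τ (Set.mem_Icc_of_Ioo hτ)).differentiableAt).differentiableWithinAt
    · intro τ hτ
      rw [interior_Icc] at hτ
      rw [(hψd τ (Set.mem_Icc_of_Ioo hτ)).deriv]
      exact hψnonpos τ (Set.mem_Icc_of_Ioo hτ)
  have hfin := hmono (Set.left_mem_Icc.mpr zero_le_one) (Set.right_mem_Icc.mpr zero_le_one)
    zero_le_one
  have hv0 : v 0 = a := by simp [hv]
  have hv1 : v 1 = a - η • g := by simp [hv]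
  simp only [hψ, hv0, hv1] at hfin
  norm_num at hfin
  nlinarith [hfin]

/-- descent inequality for `α`-GD on the robust logistic risk: with
`β' = 2α/(γ−α) + (1+α)²`, `w₀ = 0`, `η₀ = 1`, and constant step size `η < 2/β'` for
`t ≥ 1`, for every `t ≥ 1`,
`L_rob(w_{t+1}) ≤ L_rob(w_t) − η(1 − ηβ'/2)‖∇L_rob(w_t)‖²`. -/
theorem alpha_gd_logistic_descent_inequality
    (d n : ℕ) (hn : 0 < n) (x : Fin n → EuclideanSpace ℝ (Fin d)) (y : Fin n → ℝ)
    (hx : ∀ i, ‖x i‖ ≤ 1) (hy : ∀ i, y i = 1 ∨ y i = -1)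
    (wstar : EuclideanSpace ℝ (Fin d)) (hwstar : ‖wstar‖ = 1)
    (γ α : ℝ) (hγ1 : γ ≤ 1) (hmargin : ∀ i, γ ≤ y i * ⟪wstar, x i⟫)
    (hα0 : 0 ≤ α) (hαγ : α < γ)
    (η : ℝ) (hηpos : 0 < η) (hηlt : η < 2 / (2 * α / (γ - α) + (1 + α) ^ 2))
    (w : ℕ → EuclideanSpace ℝ (Fin d)) (hw0 : w 0 = 0)
    (hupd : ∀ t : ℕ, w (t + 1) = w t - ((if t = 0 then 1 else η) / n) •
      ∑ i, deriv (fun u => Real.log (1 + Real.exp u)) (-(y i) * ⟪w t, x i⟫ + α * ‖w t‖) •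
        (-(y i) • x i + α • (‖w t‖⁻¹ • w t))) :
    ∀ t : ℕ, 1 ≤ t →
      (1 / n : ℝ) * ∑ i, Real.log (1 + Real.exp (-(y i) * ⟪w (t + 1), x i⟫ + α * ‖w (t + 1)‖)) ≤
        (1 / n : ℝ) * ∑ i, Real.log (1 + Real.exp (-(y i) * ⟪w t, x i⟫ + α * ‖w t‖)) -
          η * (1 - η * (2 * α / (γ - α) + (1 + α) ^ 2) / 2) *
            ‖(1 / n : ℝ) •
              ∑ i, deriv (fun u => Real.log (1 + Real.exp u)) (-(y i) * ⟪w t, x i⟫ + α * ‖w t‖) •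
                (-(y i) • x i + α • (‖w t‖⁻¹ • w t))‖ ^ 2 := by
  have hy' : ∀ i, |y i| = 1 := fun i => by rcases hy i with h | h <;> simp [h]
  have hγpos : 0 < γ := lt_of_le_of_lt hα0 hαγ
  simp only [deriv_logexp, one_div] at hupd ⊢
  -- update rule in terms of Gv
  have hupd' : ∀ t : ℕ, 1 ≤ t → w (t + 1) = w t - η • Gv x y α (w t) := by
    intro t ht
    rw [hupd t, if_neg (Nat.one_le_iff_ne_zero.mp ht)]
    unfold Gv
    rw [smul_smul η ((n:ℝ)⁻¹), div_eq_mul_inv]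
  have hGstar : ∀ v : EuclideanSpace ℝ (Fin d), ⟪wstar, Gv x y α v⟫ ≤ 0 :=
    Gv_inner_wstar_nonpos x y wstar hwstar hmargin hα0 hαγ.le
  -- inner product with wstar stays at least γ/2
  have hstar : ∀ t : ℕ, 1 ≤ t → γ / 2 ≤ ⟪wstar, w t⟫ := by
    intro t ht
    induction t, ht using Nat.le_induction with
    | base =>
      have h0 := hupd 0
      rw [if_pos rfl, hw0] at h0
      have e : w 1 = -(Gv x y α 0) := by
        rw [h0, zero_sub]
        unfold Gv
        rw [one_div]
      rw [e, inner_neg_right]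
      have := Gv_inner_wstar_zero hn x y wstar (γ := γ) (α := α) hmargin
      linarith
    | succ t ht ih =>
      rw [hupd' t ht, inner_sub_right, real_inner_smul_right]
      have := hGstar (w t)
      nlinarith
  -- main step
  intro t ht
  set a := w t with ha
  set g := Gv x y α a with hg
  have hgoal : Lv x y α (w (t+1)) ≤ Lv x y α a -
      η * (1 - η * (2 * α / (γ - α) + (1 + α) ^ 2) / 2) * ‖g‖ ^ 2 := by
    rw [hupd' t ht]
    have hkey : ∀ τ : ℝ, τ ∈ Set.Icc (0:ℝ) 1 → γ / 2 ≤ ‖a - (τ * η) • g‖ := by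
      intro τ hτ
      have h1 : γ / 2 ≤ ⟪wstar, a - (τ * η) • g⟫ := by
        rw [inner_sub_right, real_inner_smul_right]
        have h2 := hGstar a
        have h3 : 0 ≤ τ * η := mul_nonneg hτ.1 hηpos.le
        have h4 := hstar t ht
        nlinarith
      calc γ / 2 ≤ ⟪wstar, a - (τ * η) • g⟫ := h1
      _ ≤ ‖wstar‖ * ‖a - (τ * η) • g‖ := real_inner_le_norm _ _
      _ = ‖a - (τ * η) • g‖ := by rw [hwstar, one_mul]
    have hna : γ / 2 ≤ ‖a‖ := by
      have := hkey 0 (Set.left_mem_Icc.mpr zero_le_one)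
      simpa using this
    have hne : ∀ τ : ℝ, τ ∈ Set.Icc (0:ℝ) 1 → a - (τ * η) • g ≠ 0 := by
      intro τ hτ h
      have := hkey τ hτ
      rw [h, norm_zero] at this
      linarith
    have hlip : ∀ τ : ℝ, τ ∈ Set.Icc (0:ℝ) 1 →
        ‖Gv x y α (a - (τ * η) • g) - Gv x y α a‖ ≤
          (2 * α / (γ - α) + (1 + α) ^ 2) * (τ * η * ‖g‖) := by
      intro τ hτ
      have h1 := Gv_lip x y hx hy' hα0 hαγ (hkey τ hτ) hna
      have h2 : ‖a - (τ * η) • g - a‖ = τ * η * ‖g‖ := by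
        have e : a - (τ * η) • g - a = -((τ * η) • g) := by abel
        rw [e, norm_neg, norm_smul, Real.norm_eq_abs,
          abs_of_nonneg (mul_nonneg hτ.1 hηpos.le)]
      rw [h2] at h1
      exact h1
    exact descent_core x y α (2 * α / (γ - α) + (1 + α) ^ 2) η hηpos.le a hne hlip
  exact hgoal
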